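/- arXiv:1712.03008 — 2 statements merged into one kernel-verified Lean document; each statement's English description precedes it below -/
import Mathlib

section
/- Let S, T be finite subsets of Fin N and let T_a, T_b ∈ A be homogeneous elements with T_a ∈ 𝒜(|S| mod 2) and T_b ∈ 𝒜(|T| mod 2). Then in Cl(Q) ⊗_R A the ℤ₂^N graded bracket reduces to the supercommutator of the second factors: (γ_S ⊗ T_a)·(γ_T ⊗ T_b) - (-1)^{|S ∩ T|} · (γ_T ⊗ T_b)·(γ_S ⊗ T_a) = (γ_S · γ_T) ⊗ (T_a·T_b - (-1)^{|S|·|T|} · T_b·T_a). -/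
open TensorProduct

/-- The ordered product of Clifford generators `ι (e i)` over `i ∈ S`,
taken in increasing order of indices, with `γ_∅ = 1`. -/
noncomputable def gammaProd {R M : Type*} [CommRing R] [AddCommGroup M] [Module R M]
    (Q : QuadraticForm R M) {N : ℕ} (e : Fin N → M) (S : Finset (Fin N)) :
    CliffordAlgebra Q :=
  ((S.sort (· ≤ ·)).map fun i => CliffordAlgebra.ι Q (e i)).prod

/-!
Orthogonal generators anticommute, while a generator commutes with itself. Hence moving
`γ_S` past `γ_T` costs one sign for each pair `(i, j) ∈ S × T` with `i ≠ j`, so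
`γ_S γ_T = (-1)^(|S| |T| + |S ∩ T|) γ_T γ_S`. The sign `(-1)^|S ∩ T|` of the bracket therefore
turns `γ_T γ_S` into `(-1)^(|S| |T|) γ_S γ_T`, and the Clifford factor splits off the bracket.
-/

open Finset

theorem Finset.sum_map_count_sort {α : Type*} [LinearOrder α] (S T : Finset α) :
    ((S.sort (· ≤ ·)).map (T.sort (· ≤ ·)).count).sum = #(S ∩ T) := by
  rw [← List.sum_toFinset _ (S.sort_nodup _), sort_toFinset, ← filter_mem_eq_inter, card_filter]
  refine sum_congr rfl fun i _ => ?_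
  split_ifs with hi
  · exact List.count_eq_one_of_mem (T.sort_nodup _) ((T.mem_sort _).2 hi)
  · exact List.count_eq_zero.2 (mt (T.mem_sort _).1 hi)

namespace CliffordAlgebra

variable {R M κ : Type*} [CommRing R] [AddCommGroup M] [Module R M] {Q : QuadraticForm R M}
  {e : κ → M} [DecidableEq κ]

theorem ι_mul_prod_map_ι (horth : Pairwise fun i j => Q.IsOrtho (e i) (e j)) (i : κ)
    (l : List κ) :
    ι Q (e i) * (l.map fun j => ι Q (e j)).prod =
      (-1 : ℤ) ^ (l.length + l.count i) • ((l.map fun j => ι Q (e j)).prod * ι Q (e i)) := by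
  induction l with
  | nil => simp
  | cons j l ih =>
    simp only [List.map_cons, List.prod_cons, List.length_cons, List.count_cons, beq_iff_eq]
    by_cases hji : j = i
    · subst hji
      rw [if_pos rfl, show l.length + 1 + (l.count j + 1) = l.length + l.count j + 2 by ring,
        pow_add, neg_one_sq, mul_one, mul_assoc _ _ (ι Q (e j)), ← mul_smul_comm, ← ih]
    · rw [ι_mul_ι_mul_of_isOrtho _ (horth (Ne.symm hji)), ih, if_neg hji, add_zero,
        add_right_comm, pow_succ, mul_neg_one, neg_smul, mul_smul_comm, mul_assoc]

theorem prod_map_ι_mul_prod_map_ι (horth : Pairwise fun i j => Q.IsOrtho (e i) (e j))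
    (l₁ l₂ : List κ) :
    (l₁.map fun i => ι Q (e i)).prod * (l₂.map fun j => ι Q (e j)).prod =
      (-1 : ℤ) ^ (l₁.length * l₂.length + (l₁.map l₂.count).sum) •
        ((l₂.map fun j => ι Q (e j)).prod * (l₁.map fun i => ι Q (e i)).prod) := by
  induction l₁ with
  | nil => simp
  | cons i l₁ ih =>
    simp only [List.map_cons, List.prod_cons, List.length_cons, List.sum_cons]
    rw [mul_assoc, ih, mul_smul_comm, ← mul_assoc, ι_mul_prod_map_ι horth, smul_mul_assoc,
      smul_smul, ← pow_add, mul_assoc]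
    congr 2
    ring

end CliffordAlgebra

theorem gammaProd_mul_gammaProd_swap {R M : Type*} [CommRing R] [AddCommGroup M] [Module R M]
    {Q : QuadraticForm R M} {N : ℕ} {e : Fin N → M}
    (horth : Pairwise fun i j => Q.IsOrtho (e i) (e j)) (S T : Finset (Fin N)) :
    (-1 : ℤ) ^ #(S ∩ T) • (gammaProd Q e T * gammaProd Q e S) =
      (-1 : ℤ) ^ (#S * #T) • (gammaProd Q e S * gammaProd Q e T) := by
  rw [gammaProd, gammaProd, CliffordAlgebra.prod_map_ι_mul_prod_map_ι horth,
    sum_map_count_sort, length_sort, length_sort, smul_smul, ← pow_add, inter_comm T S,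
    add_left_comm, ← two_mul, mul_comm #T, pow_add, (even_two_mul _).neg_one_pow, mul_one]

theorem tensor_graded_bracket_eq_general {R M : Type*} [CommRing R] [AddCommGroup M] [Module R M]
    (Q : QuadraticForm R M) {N : ℕ} (e : Fin N → M)
    (horth : ∀ i j : Fin N, i ≠ j → QuadraticMap.polar Q (e i) (e j) = 0)
    (A : Type*) [Ring A] [Algebra R A]
    (S T : Finset (Fin N)) (Ta Tb : A) :
    (gammaProd Q e S ⊗ₜ[R] Ta) * (gammaProd Q e T ⊗ₜ[R] Tb) -
        ((-1 : ℤ) ^ (S ∩ T).card) •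
          ((gammaProd Q e T ⊗ₜ[R] Tb) * (gammaProd Q e S ⊗ₜ[R] Ta)) =
      (gammaProd Q e S * gammaProd Q e T) ⊗ₜ[R]
        (Ta * Tb - ((-1 : ℤ) ^ (S.card * T.card)) • (Tb * Ta)) := by
  have hswap := gammaProd_mul_gammaProd_swap
    (fun i j hij => QuadraticMap.isOrtho_polarBilin.mp (horth i j hij)) S T
  rw [Algebra.TensorProduct.tmul_mul_tmul, Algebra.TensorProduct.tmul_mul_tmul, ← tmul_smul,
    ← smul_tmul, hswap, smul_tmul, tmul_sub]

/-- in `Cl(Q) ⊗ A`, the ℤ₂^N graded bracket of homogeneous basis elements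
reduces to the supercommutator of the second factors. -/
theorem tensor_graded_bracket_eq {R M : Type*} [CommRing R] [AddCommGroup M] [Module R M]
    (Q : QuadraticForm R M) {N : ℕ} (e : Fin N → M)
    (horth : ∀ i j : Fin N, i ≠ j → QuadraticMap.polar Q (e i) (e j) = 0)
    (A : Type*) [Ring A] [Algebra R A] (𝒜 : ZMod 2 → Submodule R A) [GradedAlgebra 𝒜]
    (S T : Finset (Fin N)) (Ta Tb : A)
    (hTa : Ta ∈ 𝒜 ((S.card : ZMod 2))) (hTb : Tb ∈ 𝒜 ((T.card : ZMod 2))) :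
    (gammaProd Q e S ⊗ₜ[R] Ta) * (gammaProd Q e T ⊗ₜ[R] Tb) -
        ((-1 : ℤ) ^ (S ∩ T).card) •
          ((gammaProd Q e T ⊗ₜ[R] Tb) * (gammaProd Q e S ⊗ₜ[R] Ta)) =
      (gammaProd Q e S * gammaProd Q e T) ⊗ₜ[R]
        (Ta * Tb - ((-1 : ℤ) ^ (S.card * T.card)) • (Tb * Ta)) :=
  tensor_graded_bracket_eq_general Q e horth A S T Ta Tb
end

section
/- Assume in addition that Q(e i) = 1 or Q(e i) = -1 for every i. Let S, T be finite subsets of Fin N and let T_a, T_b ∈ A be homogeneous with T_a ∈ 𝒜(|S| mod 2) and T_b ∈ 𝒜(|T| mod 2). Then there exists κ ∈ R with κ = 1 or κ = -1 such that (γ_S ⊗ T_a)·(γ_T ⊗ T_b) - (-1)^{|S ∩ T|} · (γ_T ⊗ T_b)·(γ_S ⊗ T_a) = κ • (γ_{S Δ T} ⊗ (T_a·T_b - (-1)^{|S|·|T|} · T_b·T_a)), where S Δ T is the symmetric difference; in particular the graded bracket of two homogeneous basis elements is again of the form γ_{S Δ T} ⊗ (homogeneous element of parity |S Δ T| mod 2),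 so the ℤ₂^N grading is respected. -/
/-!
Orthogonality makes distinct generators anticommute, and `ι (e i) ^ 2 = Q (e i) = ±1`. Adding
generators one at a time in increasing order then gives `γ_S γ_T = ±γ_{S Δ T}` and, counting
transpositions, `(-1)^|S ∩ T| γ_T γ_S = (-1)^(|S| |T|) γ_S γ_T`. The second relation is what
collects the two terms of the bracket into `γ_S γ_T ⊗ (T_a T_b - (-1)^(|S| |T|) T_b T_a)`;
homogeneity comes from `|S Δ T| ≡ |S| + |T| (mod 2)`.
-/

open TensorProduct

open CliffordAlgebra Finset
open scoped symmDiff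

lemma eq_one_or_eq_neg_one_mul {α : Type*} [Monoid α] [HasDistribNeg α] {a b : α}
    (ha : a = 1 ∨ a = -1) (hb : b = 1 ∨ b = -1) : a * b = 1 ∨ a * b = -1 := by
  rcases ha with rfl | rfl <;> rcases hb with rfl | rfl <;> simp

namespace Finset

variable {α : Type*} [DecidableEq α]

lemma insert_eq_singleton_symmDiff {a : α} {s : Finset α} (h : a ∉ s) :
    insert a s = {a} ∆ s :=
  (disjoint_singleton_left.mpr h).symmDiff_eq_sup.symm

lemma card_symmDiff_add_two_mul_card_inter (s t : Finset α) :
    #(s ∆ t) + 2 * #(s ∩ t) = #s + #t := by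
  rw [symmDiff_def, sup_eq_union, card_union_of_disjoint disjoint_sdiff_sdiff,
    ← card_sdiff_add_card_inter s t, ← card_sdiff_add_card_inter t s, inter_comm t s]
  ring

lemma card_insert_inter_add_card_erase {a : α} {s : Finset α} (h : a ∉ s) (t : Finset α) :
    #(insert a s ∩ t) + #(t.erase a) = #(s ∩ t) + #t := by
  by_cases ha : a ∈ t
  · rw [insert_inter_of_mem ha, card_insert_of_notMem fun h' => h (mem_inter.mp h').1,
      card_erase_of_mem ha]
    have := card_pos.mpr ⟨a, ha⟩
    omega
  · rw [insert_inter_of_notMem ha, erase_eq_of_notMem ha]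

end Finset

section gammaProd

variable {R M : Type*} [CommRing R] [AddCommGroup M] [Module R M]
  {Q : QuadraticForm R M} {N : ℕ} {e : Fin N → M}

@[simp]
lemma gammaProd_empty : gammaProd Q e ∅ = 1 := by simp [gammaProd]

@[simp]
lemma gammaProd_singleton (i : Fin N) : gammaProd Q e {i} = ι Q (e i) := by simp [gammaProd]

lemma gammaProd_insert_of_lt {i : Fin N} {S : Finset (Fin N)} (hi : ∀ j ∈ S, i < j) :
    gammaProd Q e (insert i S) = ι Q (e i) * gammaProd Q e S := by
  rw [gammaProd, sort_insert _ (fun j hj => (hi j hj).le) fun h => lt_irrefl i (hi i h)]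
  rfl

lemma gammaProd_mul_ι (horth : Pairwise fun i j => Q.IsOrtho (e i) (e j))
    (i : Fin N) (T : Finset (Fin N)) :
    gammaProd Q e T * ι Q (e i) =
      (-1 : ℤ) ^ #(T.erase i) • (ι Q (e i) * gammaProd Q e T) := by
  induction T using Finset.induction_on_min with
  | empty => simp
  | insert j T hj ih =>
    have hjT : j ∉ T := fun h => lt_irrefl j (hj j h)
    rw [gammaProd_insert_of_lt hj, mul_assoc, ih]
    obtain rfl | hij := eq_or_ne i j
    · rw [erase_insert hjT, erase_eq_of_notMem hjT, mul_smul_comm, ← mul_assoc]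
    · rw [erase_insert_of_ne hij.symm, card_insert_of_notMem fun h => hjT (mem_of_mem_erase h),
        mul_smul_comm, ι_mul_ι_mul_of_isOrtho _ (horth hij.symm), pow_succ, mul_neg_one,
        neg_smul, smul_neg]

lemma gammaProd_comm (horth : Pairwise fun i j => Q.IsOrtho (e i) (e j))
    (S T : Finset (Fin N)) :
    (-1 : ℤ) ^ #(S ∩ T) • (gammaProd Q e T * gammaProd Q e S) =
      (-1 : ℤ) ^ (#S * #T) • (gammaProd Q e S * gammaProd Q e T) := by
  induction S using Finset.induction_on_min with
  | empty => simp
  | insert i S hi ih =>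
    have hiS : i ∉ S := fun h => lt_irrefl i (hi i h)
    have hexp := card_insert_inter_add_card_erase hiS T
    calc (-1 : ℤ) ^ #(insert i S ∩ T) • (gammaProd Q e T * gammaProd Q e (insert i S))
        = (-1 : ℤ) ^ (#(S ∩ T) + #T) •
            (ι Q (e i) * (gammaProd Q e T * gammaProd Q e S)) := by
          rw [gammaProd_insert_of_lt hi, ← mul_assoc, gammaProd_mul_ι horth, smul_mul_assoc,
            smul_smul, ← pow_add, hexp, mul_assoc]
      _ = (-1 : ℤ) ^ (#(insert i S) * #T) •
            (gammaProd Q e (insert i S) * gammaProd Q e T) := by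
          rw [pow_add, mul_comm, ← smul_smul, ← mul_smul_comm, ih, mul_smul_comm, smul_smul,
            ← pow_add, card_insert_of_notMem hiS, gammaProd_insert_of_lt hi, mul_assoc,
            add_one_mul #S, add_comm (#S * #T)]

lemma ι_mul_gammaProd (horth : Pairwise fun i j => Q.IsOrtho (e i) (e j))
    (hnorm : ∀ i, Q (e i) = 1 ∨ Q (e i) = -1) (i : Fin N) (T : Finset (Fin N)) :
    ∃ κ : R, (κ = 1 ∨ κ = -1) ∧
      ι Q (e i) * gammaProd Q e T = κ • gammaProd Q e ({i} ∆ T) := by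
  induction T using Finset.induction_on_min with
  | empty => exact ⟨1, .inl rfl, by rw [← bot_eq_empty, symmDiff_bot, one_smul]; simp⟩
  | insert j T hj ih =>
    have hjT : j ∉ T := fun h => lt_irrefl j (hj j h)
    rw [gammaProd_insert_of_lt hj, insert_eq_singleton_symmDiff hjT]
    rcases lt_trichotomy i j with hij | rfl | hji
    · have hi : ∀ x ∈ {j} ∆ T, i < x := by
        simp only [← insert_eq_singleton_symmDiff hjT, mem_insert]
        rintro x (rfl | hx)
        exacts [hij, hij.trans (hj x hx)]
      refine ⟨1, .inl rfl, ?_⟩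
      rw [one_smul, ← insert_eq_singleton_symmDiff fun h => lt_irrefl i (hi i h),
        gammaProd_insert_of_lt hi, ← insert_eq_singleton_symmDiff hjT, gammaProd_insert_of_lt hj]
    · refine ⟨Q (e i), hnorm i, ?_⟩
      rw [symmDiff_symmDiff_cancel_left, ← mul_assoc, ι_sq_scalar, ← Algebra.smul_def]
    · obtain ⟨κ, hκ, hκT⟩ := ih
      have hj' : ∀ x ∈ {i} ∆ T, j < x := by
        intro x hx
        rcases mem_symmDiff.mp hx with ⟨hx, -⟩ | ⟨hx, -⟩
        exacts [mem_singleton.mp hx ▸ hji, hj x hx]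
      refine ⟨-κ, hκ.symm.imp (fun h => by rw [h, neg_neg]) (fun h => by rw [h]), ?_⟩
      rw [ι_mul_ι_mul_of_isOrtho _ (horth hji.ne'), hκT, mul_smul_comm,
        ← gammaProd_insert_of_lt hj', insert_eq_singleton_symmDiff fun h => lt_irrefl j (hj' j h),
        symmDiff_left_comm, neg_smul]

lemma gammaProd_mul_gammaProd (horth : Pairwise fun i j => Q.IsOrtho (e i) (e j))
    (hnorm : ∀ i, Q (e i) = 1 ∨ Q (e i) = -1) (S T : Finset (Fin N)) :
    ∃ κ : R, (κ = 1 ∨ κ = -1) ∧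
      gammaProd Q e S * gammaProd Q e T = κ • gammaProd Q e (S ∆ T) := by
  induction S using Finset.induction_on_min with
  | empty => exact ⟨1, .inl rfl, by rw [← bot_eq_empty, bot_symmDiff, one_smul]; simp⟩
  | insert i S hi ih =>
    obtain ⟨κ, hκ, hκST⟩ := ih
    obtain ⟨κ', hκ', hκ'ST⟩ := ι_mul_gammaProd horth hnorm i (S ∆ T)
    refine ⟨κ * κ', eq_one_or_eq_neg_one_mul hκ hκ', ?_⟩
    rw [gammaProd_insert_of_lt hi, mul_assoc, hκST, mul_smul_comm, hκ'ST, smul_smul,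
      insert_eq_singleton_symmDiff fun h => lt_irrefl i (hi i h), symmDiff_assoc]

end gammaProd

lemma mul_sub_zsmul_mul_mem_graded {I A σ : Type*} [AddCommMonoid I] [Ring A] [SetLike σ A]
    [AddSubgroupClass σ A] {𝒜 : I → σ} [SetLike.GradedMul 𝒜] {i j : I} {a b : A}
    (ha : a ∈ 𝒜 i) (hb : b ∈ 𝒜 j) (n : ℤ) : a * b - n • (b * a) ∈ 𝒜 (i + j) :=
  sub_mem (SetLike.mul_mem_graded ha hb)
    (zsmul_mem (add_comm i j ▸ SetLike.mul_mem_graded hb ha) n)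

lemma tmul_mul_tmul_sub_zsmul {R B A : Type*} [CommRing R] [Ring B] [Algebra R B] [Ring A]
    [Algebra R A] {x y : B} {a b : A} {s t : ℤ} (h : s • (y * x) = t • (x * y)) :
    (x ⊗ₜ[R] a) * (y ⊗ₜ[R] b) - s • ((y ⊗ₜ[R] b) * (x ⊗ₜ[R] a)) =
      (x * y) ⊗ₜ[R] (a * b - t • (b * a)) := by
  rw [Algebra.TensorProduct.tmul_mul_tmul, Algebra.TensorProduct.tmul_mul_tmul, smul_tmul', h,
    smul_tmul, tmul_sub]

/-- if moreover `Q (e i) = ±1` for all `i`, the graded bracket of two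
homogeneous basis elements of `Cl(Q) ⊗ A` equals `κ • (γ_{S Δ T} ⊗ supercommutator)`
with `κ = ±1`, and the supercommutator is homogeneous of parity `|S Δ T| mod 2`,
so the ℤ₂^N grading is respected. -/
theorem tensor_graded_bracket_respects_grading {R M : Type*} [CommRing R] [AddCommGroup M]
    [Module R M] (Q : QuadraticForm R M) {N : ℕ} (e : Fin N → M)
    (horth : ∀ i j : Fin N, i ≠ j → QuadraticMap.polar Q (e i) (e j) = 0)
    (hnorm : ∀ i : Fin N, Q (e i) = 1 ∨ Q (e i) = -1)
    (A : Type*) [Ring A] [Algebra R A] (𝒜 : ZMod 2 → Submodule R A) [GradedAlgebra 𝒜]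
    (S T : Finset (Fin N)) (Ta Tb : A)
    (hTa : Ta ∈ 𝒜 ((S.card : ZMod 2))) (hTb : Tb ∈ 𝒜 ((T.card : ZMod 2))) :
    ∃ κ : R, (κ = 1 ∨ κ = -1) ∧
      (gammaProd Q e S ⊗ₜ[R] Ta) * (gammaProd Q e T ⊗ₜ[R] Tb) -
          ((-1 : ℤ) ^ (S ∩ T).card) •
            ((gammaProd Q e T ⊗ₜ[R] Tb) * (gammaProd Q e S ⊗ₜ[R] Ta)) =
        κ • (gammaProd Q e (symmDiff S T) ⊗ₜ[R]
          (Ta * Tb - ((-1 : ℤ) ^ (S.card * T.card)) • (Tb * Ta))) ∧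
      (Ta * Tb - ((-1 : ℤ) ^ (S.card * T.card)) • (Tb * Ta)) ∈
        𝒜 (((symmDiff S T).card : ZMod 2)) := by
  have horth' : Pairwise fun i j => Q.IsOrtho (e i) (e j) := fun i j hij =>
    QuadraticMap.isOrtho_polarBilin.mp (horth i j hij)
  obtain ⟨κ, hκ, hST⟩ := gammaProd_mul_gammaProd horth' hnorm S T
  have hparity : (#(S ∆ T) : ZMod 2) = #S + #T := by
    have h := congrArg (Nat.cast : ℕ → ZMod 2) (card_symmDiff_add_two_mul_card_inter S T)
    rwa [Nat.cast_add, Nat.cast_add, Nat.cast_mul, Nat.cast_ofNat, show (2 : ZMod 2) = 0 from rfl,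
      zero_mul, add_zero] at h
  refine ⟨κ, hκ, ?_, hparity ▸ mul_sub_zsmul_mul_mem_graded hTa hTb _⟩
  rw [tmul_mul_tmul_sub_zsmul (gammaProd_comm horth' S T), hST, smul_tmul']
end
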